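/- In a J-category, given a weak pullback D-C-B'-A with morphisms g : D → A, g' : C → B', f : A → B', and any morphism h : X → A, the morphism h admits a weak lifting along g if and only if f∘h admits a weak lifting along g'. -/

import Mathlib

open CategoryTheory CategoryTheory.Limits ZeroObject

universe v u v' u'

variable (C : Type u) [Category.{v} C] [HasZeroObject C] [HasZeroMorphisms C]

/-- A category satisfying axioms (J1)-(J4) of Doeraene's J-categories:
a pointed category with fibrations, cofibrations and weak equivalences. -/
structure PreJCat where
  fib : MorphismProperty C
  cofib : MorphismProperty C
  weq : MorphismProperty C
  /-- (J1) isomorphisms are trivial cofibrations -/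
  iso_triv_cofib : ∀ {X Y : C} (f : X ⟶ Y), IsIso f → cofib f ∧ weq f
  /-- (J1) isomorphisms are trivial fibrations -/
  iso_triv_fib : ∀ {X Y : C} (f : X ⟶ Y), IsIso f → fib f ∧ weq f
  fib_comp : ∀ {X Y Z : C} {f : X ⟶ Y} {g : Y ⟶ Z}, fib f → fib g → fib (f ≫ g)
  cofib_comp : ∀ {X Y Z : C} {f : X ⟶ Y} {g : Y ⟶ Z}, cofib f → cofib g → cofib (f ≫ g)
  /-- (J1) two-out-of-three for weak equivalences -/
  weq_comp : ∀ {X Y Z : C} {f : X ⟶ Y} {g : Y ⟶ Z}, weq f → weq g → weq (f ≫ g)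
  weq_of_comp_left : ∀ {X Y Z : C} {f : X ⟶ Y} {g : Y ⟶ Z}, weq g → weq (f ≫ g) → weq f
  weq_of_comp_right : ∀ {X Y Z : C} {f : X ⟶ Y} {g : Y ⟶ Z}, weq f → weq (f ≫ g) → weq g
  /-- (J2) pullbacks of fibrations exist, and the base extension is a fibration -/
  pb_exists : ∀ {E B B' : C} (p : E ⟶ B) (f : B' ⟶ B), fib p →
    ∃ (P : C) (fb : P ⟶ E) (pb : P ⟶ B'), IsPullback fb pb p f ∧ fib pb
  /-- (J2) base extensions of weak equivalences along fibrations are weak equivalences -/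
  pb_weq : ∀ {E B B' P : C} {p : E ⟶ B} {f : B' ⟶ B} {fb : P ⟶ E} {pb : P ⟶ B'},
    fib p → IsPullback fb pb p f → (weq f → weq fb) ∧ (weq p → weq pb)
  /-- (J2) dual: pushouts of cofibrations exist -/
  po_exists : ∀ {A X Y : C} (i : A ⟶ X) (g : A ⟶ Y), cofib i →
    ∃ (Q : C) (inl : X ⟶ Q) (inr : Y ⟶ Q), IsPushout i g inl inr ∧ cofib inr
  po_weq : ∀ {A X Y Q : C} {i : A ⟶ X} {g : A ⟶ Y} {inl : X ⟶ Q} {inr : Y ⟶ Q},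
    cofib i → IsPushout i g inl inr → (weq g → weq inl) ∧ (weq i → weq inr)
  /-- (J3) F-factorizations exist -/
  F_fac : ∀ {X Y : C} (f : X ⟶ Y), ∃ (Z : C) (τ : X ⟶ Z) (q : Z ⟶ Y),
    weq τ ∧ fib q ∧ τ ≫ q = f
  /-- (J3) C-factorizations exist -/
  C_fac : ∀ {X Y : C} (f : X ⟶ Y), ∃ (Z : C) (i : X ⟶ Z) (σ : Z ⟶ Y),
    cofib i ∧ weq σ ∧ i ≫ σ = f
  /-- (J4) cofibrant replacements exist -/
  cof_replace : ∀ X : C, ∃ (Xb : C) (q : Xb ⟶ X), fib q ∧ weq q ∧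
    (∀ {E : C} (p : E ⟶ Xb), fib p → weq p → ∃ s : Xb ⟶ E, s ≫ p = 𝟙 Xb)

variable {C}

namespace PreJCat

/-- An object is a cofibrant model if every trivial fibration onto it admits a section. -/
def CofModel (P : PreJCat C) (X : C) : Prop :=
  ∀ {E : C} (p : E ⟶ X), P.fib p → P.weq p → ∃ s : X ⟶ E, s ≫ p = 𝟙 X

/-- An object is e-fibrant if the morphism to the zero object is a fibration. -/
def EFibrant (P : PreJCat C) (X : C) : Prop := P.fib (0 : X ⟶ 0)

/-- `f` admits a weak lifting along `g` (all objects being cofibrant models). -/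
def WeakLifting (P : PreJCat C) {A B Cc : C} (f : A ⟶ B) (g : Cc ⟶ B) : Prop :=
  ∃ (E : C) (τ : Cc ⟶ E) (q : E ⟶ B), P.weq τ ∧ P.fib q ∧ τ ≫ q = g ∧
    ∃ s : A ⟶ E, s ≫ q = f

/-- `g` admits a weak section. -/
def HasWeakSection (P : PreJCat C) {E B : C} (g : E ⟶ B) : Prop :=
  P.WeakLifting (𝟙 B) g

/-- `j : J ⟶ B` is a join morphism of `f : A ⟶ B` and `g : Cc ⟶ B`: built from an
F-factorization of `g`, a pullback, a C-factorization and a pushout. -/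
def IsJoin (P : PreJCat C) {A Cc B J : C} (f : A ⟶ B) (g : Cc ⟶ B) (j : J ⟶ B) : Prop :=
  ∃ (E : C) (τ : Cc ⟶ E) (q : E ⟶ B), P.weq τ ∧ P.fib q ∧ τ ≫ q = g ∧
  ∃ (E' Z : C) (fbar : E' ⟶ E) (pbar : E' ⟶ A) (i : E' ⟶ Z) (σ : Z ⟶ E)
    (a : A ⟶ J) (bz : Z ⟶ J),
    IsPullback fbar pbar q f ∧ P.cofib i ∧ P.weq σ ∧ i ≫ σ = fbar ∧
    IsPushout pbar i a bz ∧ a ≫ j = f ∧ bz ≫ j = σ ≫ q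

/-- `IsIterJoin P p n h` : `h` is an `n`-th iterated join morphism `*ⁿ_B E ⟶ B` of `p`. -/
inductive IsIterJoin (P : PreJCat C) {E B : C} (p : E ⟶ B) : ℕ → ∀ {X : C}, (X ⟶ B) → Prop
  | zero : IsIterJoin P p 0 p
  | succ {n : ℕ} {X Y : C} {h : X ⟶ B} {h' : Y ⟶ B} :
      IsIterJoin P p n h → P.IsJoin h p h' → IsIterJoin P p (n + 1) h'

/-- The Ganea-type sectional category of a morphism. -/
noncomputable def Gsecat (P : PreJCat C) {E B : C} (p : E ⟶ B) : ℕ∞ :=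
  sInf {n : ℕ∞ | ∃ m : ℕ, n = (m : ℕ∞) ∧
    ∃ (X : C) (h : X ⟶ B), P.IsIterJoin p m h ∧ P.HasWeakSection h}

end PreJCat

/-- `p1, p2` exhibit `Pd` as a binary product of `X` and `Y`. -/
def IsBinProd {X Y Pd : C} (p1 : Pd ⟶ X) (p2 : Pd ⟶ Y) : Prop :=
  Nonempty (IsLimit (BinaryFan.mk p1 p2))

namespace PreJCat

/-- `IsFatWedge P p n j Δ` : `j : Tⁿ(p) ⟶ B^{n+1}` is an `n`-th fat wedge morphism of `p`
together with the diagonal `Δ : B ⟶ B^{n+1}`. -/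
inductive IsFatWedge (P : PreJCat C) {E B : C} (p : E ⟶ B) :
    ℕ → ∀ {T Pw : C}, (T ⟶ Pw) → (B ⟶ Pw) → Prop
  | zero : IsFatWedge P p 0 p (𝟙 B)
  | succ {n : ℕ} {T Pn : C} {j : T ⟶ Pn} {Δ : B ⟶ Pn}
      (hprev : IsFatWedge P p n j Δ)
      {Pn1 : C} {pr1 : Pn1 ⟶ Pn} {pr2 : Pn1 ⟶ B} (hP : IsBinProd pr1 pr2)
      {TB : C} {q1 : TB ⟶ T} {q2 : TB ⟶ B} (hTB : IsBinProd q1 q2)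
      {PE : C} {r1 : PE ⟶ Pn} {r2 : PE ⟶ E} (hPE : IsBinProd r1 r2)
      {jB : TB ⟶ Pn1} (hjB : jB ≫ pr1 = q1 ≫ j ∧ jB ≫ pr2 = q2)
      {pP : PE ⟶ Pn1} (hpP : pP ≫ pr1 = r1 ∧ pP ≫ pr2 = r2 ≫ p)
      {Tn1 : C} {j' : Tn1 ⟶ Pn1} (hjoin : P.IsJoin jB pP j')
      {Δ' : B ⟶ Pn1} (hΔ : Δ' ≫ pr1 = Δ ∧ Δ' ≫ pr2 = 𝟙 B) :
      IsFatWedge P p (n + 1) j' Δ'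

/-- The Whitehead-type sectional category of a morphism with e-fibrant codomain. -/
noncomputable def WsecatE (P : PreJCat C) {E B : C} (p : E ⟶ B) : ℕ∞ :=
  sInf {n : ℕ∞ | ∃ m : ℕ, n = (m : ℕ∞) ∧
    ∃ (T Pw : C) (j : T ⟶ Pw) (Δ : B ⟶ Pw), P.IsFatWedge p m j Δ ∧ P.WeakLifting Δ j}

/-- The Whitehead-type sectional category of an arbitrary morphism, via e-fibrant
replacements of the codomain. -/
noncomputable def Wsecat (P : PreJCat C) {E B : C} (p : E ⟶ B) : ℕ∞ :=
  ⨅ (F : C) (τ : B ⟶ F) (_ : P.weq τ ∧ P.EFibrant F), P.WsecatE (p ≫ τ)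

/-- A commutative square is a homotopy pullback. -/
def IsHPB (P : PreJCat C) {D A Cc B : C} (f' : D ⟶ Cc) (g' : D ⟶ A)
    (g : Cc ⟶ B) (f : A ⟶ B) : Prop :=
  f' ≫ g = g' ≫ f ∧ ∃ (E : C) (τ : Cc ⟶ E) (q : E ⟶ B), P.weq τ ∧ P.fib q ∧ τ ≫ q = g ∧
    ∃ (Pt : C) (pr1 : Pt ⟶ E) (pr2 : Pt ⟶ A), IsPullback pr1 pr2 q f ∧
      ∃ w : D ⟶ Pt, P.weq w ∧ w ≫ pr1 = f' ≫ τ ∧ w ≫ pr2 = g'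

/-- A commutative square is a homotopy pushout. -/
def IsHPO (P : PreJCat C) {A B Cc D : C} (f : A ⟶ B) (g : A ⟶ Cc)
    (i' : B ⟶ D) (j' : Cc ⟶ D) : Prop :=
  f ≫ i' = g ≫ j' ∧ ∃ (Z : C) (i : A ⟶ Z) (σ : Z ⟶ B), P.cofib i ∧ P.weq σ ∧ i ≫ σ = f ∧
    ∃ (Q : C) (inl : Z ⟶ Q) (inr : Cc ⟶ Q), IsPushout i g inl inr ∧
      ∃ w : Q ⟶ D, P.weq w ∧ inl ≫ w = σ ≫ i' ∧ inr ≫ w = j'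

/-- `A-A'-B'-B` is a weak pullback over `b : B ⟶ B'` (all objects cofibrant models). -/
def IsWeakPullback (P : PreJCat C) {A B A' B' : C}
    (f : A ⟶ B) (f' : A' ⟶ B') (b : B ⟶ B') : Prop :=
  ∃ (X : C) (τ : A' ⟶ X) (q : X ⟶ B'), P.weq τ ∧ P.fib q ∧ τ ≫ q = f' ∧
    ∃ x : A ⟶ X, P.IsHPB x f q b

/-- `g : G ⟶ B` is an `n`-th Ganea map of `B`: the `n`-th iterated join of `0 ⟶ B`. -/
def IsGaneaMap (P : PreJCat C) (B : C) (n : ℕ) {G : C} (g : G ⟶ B) : Prop :=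
  P.IsIterJoin (0 : (0 : C) ⟶ B) n g

/-- The Lusternik-Schnirelmann category of an object. -/
noncomputable def catObj (P : PreJCat C) (B : C) : ℕ∞ :=
  sInf {n : ℕ∞ | ∃ m : ℕ, n = (m : ℕ∞) ∧
    ∃ (G : C) (g : G ⟶ B), P.IsGaneaMap B m g ∧ P.HasWeakSection g}

/-- The Lusternik-Schnirelmann category of a morphism `b : B ⟶ B'`:
least `n` such that `b` admits a weak lifting along the `n`-th Ganea map of `B'`. -/
noncomputable def catMor (P : PreJCat C) {B B' : C} (b : B ⟶ B') : ℕ∞ :=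
  sInf {n : ℕ∞ | ∃ m : ℕ, n = (m : ℕ∞) ∧
    ∃ (G : C) (g : G ⟶ B'), P.IsGaneaMap B' m g ∧ P.WeakLifting b g}

/-- One step of a zigzag: a weak equivalence of morphisms in the arrow category. -/
def MorWeqStep (P : PreJCat C) (u v : Arrow C) : Prop :=
  ∃ h : u ⟶ v, P.weq h.left ∧ P.weq h.right

/-- Two morphisms are weakly equivalent: joined by a finite zigzag of weak
equivalences of morphisms. -/
def WeaklyEquivMor (P : PreJCat C) (u v : Arrow C) : Prop :=
  Relation.EqvGen P.MorWeqStep u v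

def ObjWeqStep (P : PreJCat C) (X Y : C) : Prop := ∃ f : X ⟶ Y, P.weq f

/-- Two objects are weakly equivalent: joined by a finite zigzag of weak equivalences. -/
def WeaklyEquivObj (P : PreJCat C) (X Y : C) : Prop :=
  Relation.EqvGen P.ObjWeqStep X Y

/-- The abstract topological complexity of an e-fibrant object:
the sectional category of the diagonal `B ⟶ B × B`. -/
noncomputable def TCE (P : PreJCat C) (B : C) : ℕ∞ :=
  ⨅ (Pd : C) (p1 : Pd ⟶ B) (p2 : Pd ⟶ B) (_ : IsBinProd p1 p2)
    (Δ : B ⟶ Pd) (_ : Δ ≫ p1 = 𝟙 B ∧ Δ ≫ p2 = 𝟙 B), P.Gsecat Δ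

/-- The abstract topological complexity of an arbitrary object, via e-fibrant
replacements. -/
noncomputable def TC (P : PreJCat C) (B : C) : ℕ∞ :=
  ⨅ (F : C) (τ : B ⟶ F) (_ : P.weq τ ∧ P.EFibrant F), P.TCE F

end PreJCat

variable (C)

/-- A J-category: (J1)-(J4) together with the cube axiom (J5). -/
structure JCat extends PreJCat C where
  /-- (J5) the cube axiom: in a commutative cube whose bottom face is a homotopy
  pushout and whose vertical faces are homotopy pullbacks, the top face is a
  homotopy pushout. -/
  cube : ∀ {X00 X01 X10 X11 Y00 Y01 Y10 Y11 : C}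
    {tf : X00 ⟶ X01} {tg : X00 ⟶ X10} {ti : X01 ⟶ X11} {tj : X10 ⟶ X11}
    {bf : Y00 ⟶ Y01} {bg : Y00 ⟶ Y10} {bi : Y01 ⟶ Y11} {bj : Y10 ⟶ Y11}
    {v00 : X00 ⟶ Y00} {v01 : X01 ⟶ Y01} {v10 : X10 ⟶ Y10} {v11 : X11 ⟶ Y11},
    tf ≫ ti = tg ≫ tj →
    toPreJCat.IsHPO bf bg bi bj →
    toPreJCat.IsHPB tf v00 v01 bf →
    toPreJCat.IsHPB tg v00 v10 bg →
    toPreJCat.IsHPB ti v01 v11 bi →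
    toPreJCat.IsHPB tj v10 v11 bj →
    toPreJCat.IsHPO tf tg ti tj

variable {C}

/-- A modelization functor: preserves weak equivalences, homotopy pullbacks and
homotopy pushouts. -/
structure ModelizationFunctor {D : Type u'} [Category.{v'} D] [HasZeroObject D]
    [HasZeroMorphisms D] (P : PreJCat C) (Q : PreJCat D) where
  F : C ⥤ D
  map_weq : ∀ {X Y : C} (f : X ⟶ Y), P.weq f → Q.weq (F.map f)
  map_hpb : ∀ {Dd A Cc B : C} {f' : Dd ⟶ Cc} {g' : Dd ⟶ A} {g : Cc ⟶ B} {f : A ⟶ B},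
    P.IsHPB f' g' g f → Q.IsHPB (F.map f') (F.map g') (F.map g) (F.map f)
  map_hpo : ∀ {A B Cc Dd : C} {f : A ⟶ B} {g : A ⟶ Cc} {i' : B ⟶ Dd} {j' : Cc ⟶ Dd},
    P.IsHPO f g i' j' → Q.IsHPO (F.map f) (F.map g) (F.map i') (F.map j')

/-! A weak pullback is, up to a weak equivalence `D ⟶ Pt`, an honest pullback `Pt` of a fibration
replacing `g'`. Since all objects are cofibrant models, a weak lifting along a morphism yields a
strict lift through every factorization of it by a fibration (compare the two factorizations over
a pullback and take a section of the resulting trivial fibration). Strict lifts into the pullback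
`Pt` and into the fibration `E ↠ B'` then correspond by the universal property. -/

namespace PreJCat

variable {𝒞 : Type*} [Category 𝒞] (P : PreJCat 𝒞)

lemma fib_of_isPullback {E B B' Pt : 𝒞} {p : E ⟶ B} {f : B' ⟶ B}
    {fb : Pt ⟶ E} {pb : Pt ⟶ B'} (hp : P.fib p) (h : IsPullback fb pb p f) : P.fib pb := by
  obtain ⟨P₀, fb₀, pb₀, h₀, hpb₀⟩ := P.pb_exists p f hp
  rw [← IsPullback.isoIsPullback_hom_snd _ _ h h₀]
  exact P.fib_comp (P.iso_triv_fib _ inferInstance).1 hpb₀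

lemma exists_comp_eq_of_weq_of_fib {Cc E₁ E₂ B : 𝒞} {τ₁ : Cc ⟶ E₁} {q₁ : E₁ ⟶ B}
    {τ₂ : Cc ⟶ E₂} {q₂ : E₂ ⟶ B} (hE₁ : P.CofModel E₁) (hτ₁ : P.weq τ₁) (hq₂ : P.fib q₂)
    (hcomm : τ₂ ≫ q₂ = τ₁ ≫ q₁) : ∃ r : E₁ ⟶ E₂, r ≫ q₂ = q₁ := by
  obtain ⟨Pt, fb, pb, hPt, hpb⟩ := P.pb_exists q₂ q₁ hq₂
  obtain ⟨Z, τ₃, q₃, hτ₃, hq₃, hfac₃⟩ := P.F_fac (hPt.lift τ₂ τ₁ hcomm)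
  -- `q₃ ≫ pb` is a trivial fibration onto `E₁`, by two-out-of-three against `τ₁`
  have hweq : P.weq (q₃ ≫ pb) := by
    refine P.weq_of_comp_right hτ₃ ?_
    rwa [← Category.assoc, hfac₃, hPt.lift_snd]
  obtain ⟨r, hr⟩ := hE₁ (q₃ ≫ pb) (P.fib_comp hq₃ hpb) hweq
  refine ⟨r ≫ q₃ ≫ fb, ?_⟩
  calc (r ≫ q₃ ≫ fb) ≫ q₂ = (r ≫ q₃ ≫ pb) ≫ q₁ := by simp only [Category.assoc, hPt.w]
    _ = q₁ := by rw [hr, Category.id_comp]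

lemma WeakLifting.exists_lift {P : PreJCat 𝒞} (hc : ∀ X : 𝒞, P.CofModel X)
    {A B Cc E : 𝒞} {u : A ⟶ B} {g : Cc ⟶ B} (hl : P.WeakLifting u g)
    {τ : Cc ⟶ E} {q : E ⟶ B} (hq : P.fib q) (hfac : τ ≫ q = g) :
    ∃ s : A ⟶ E, s ≫ q = u := by
  obtain ⟨E₁, τ₁, q₁, hτ₁, -, hfac₁, s, hs⟩ := hl
  obtain ⟨r, hr⟩ :=
    P.exists_comp_eq_of_weq_of_fib (hc E₁) hτ₁ hq (hfac.trans hfac₁.symm)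
  exact ⟨s ≫ r, by rw [Category.assoc, hr, hs]⟩

lemma IsWeakPullback.exists_isPullback {P : PreJCat 𝒞} {Dd A Cc B' : 𝒞}
    {g : Dd ⟶ A} {g' : Cc ⟶ B'} {f : A ⟶ B'} (hw : P.IsWeakPullback g g' f) :
    ∃ (E : 𝒞) (τ : Cc ⟶ E) (q : E ⟶ B'), P.weq τ ∧ P.fib q ∧ τ ≫ q = g' ∧
      ∃ (Pt : 𝒞) (pr₁ : Pt ⟶ E) (pr₂ : Pt ⟶ A), IsPullback pr₁ pr₂ q f ∧
        ∃ w : Dd ⟶ Pt, P.weq w ∧ w ≫ pr₂ = g := by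
  obtain ⟨E₀, τ₀, q₀, hτ₀, -, hfac₀, -, -, E, τ, q, hτ, hq, hfac, Pt, pr₁, pr₂, hPt,
    w, hw, -, hw₂⟩ := hw
  exact ⟨E, τ₀ ≫ τ, q, P.weq_comp hτ₀ hτ, hq, by rw [Category.assoc, hfac, hfac₀],
    Pt, pr₁, pr₂, hPt, w, hw, hw₂⟩

end PreJCat

/-- In a J-category, given a weak pullback `D-C-B'-A` over
`f : A ⟶ B'` and any `h : X ⟶ A`, `h` admits a weak lifting along `g` iff
`h ≫ f` admits a weak lifting along `g'`. -/
theorem weakLifting_iff_of_weakPullback (J : JCat C)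
    (hc : ∀ X : C, J.toPreJCat.CofModel X)
    {Dd A Cc B' X : C} (g : Dd ⟶ A) (g' : Cc ⟶ B') (f : A ⟶ B')
    (hw : J.toPreJCat.IsWeakPullback g g' f) (h : X ⟶ A) :
    J.toPreJCat.WeakLifting h g ↔ J.toPreJCat.WeakLifting (h ≫ f) g' := by
  obtain ⟨E, τ, q, hτ, hq, hfac, Pt, pr₁, pr₂, hPt, w, hw, hw₂⟩ := hw.exists_isPullback
  have hpr₂ : J.fib pr₂ := J.fib_of_isPullback hq hPt
  constructor
  · intro hl
    obtain ⟨s, hs⟩ := hl.exists_lift hc hpr₂ hw₂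
    exact ⟨E, τ, q, hτ, hq, hfac, s ≫ pr₁, by rw [Category.assoc, hPt.w, ← Category.assoc, hs]⟩
  · intro hl
    obtain ⟨t, ht⟩ := hl.exists_lift hc hq hfac
    exact ⟨Pt, w, pr₂, hw, hpr₂, hw₂, hPt.lift t h ht, hPt.lift_snd t h ht⟩
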